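/- Let f:D→ℝ be strongly tree-submodular and x∈D, and suppose that for each i∈V the vertex x_i has exactly two children c_i^{−1} and c_i^{+1} in T_i. For u ∈ {−1,0,+1}^n define y^u ∈ D by y^u_i = x_i if u_i = 0 and y^u_i = c_i^{u_i} otherwise. Then h(u) = f(y^u) is bisubmodular: h(u)+h(v) ≥ h(u⊓v)+h(u⊔v) for all u,v ∈ {−1,0,+1}^n, where componentwise u⊔v = sign(u+v) and u⊓v = |uv|·sign(u+v). (The restriction of f to OUTWARD(x) is a bisubmodular function when the trees are binary.) -/

import Mathlib

/-- A finite rooted tree on vertex set `V`, encoded by its root, the parent function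
(with `parent root = root`) and the depth function (distance to the root). -/
structure RTree (V : Type*) where
  root : V
  parent : V → V
  depth : V → ℕ
  parent_root : parent root = root
  depth_root : depth root = 0
  depth_parent : ∀ v, v ≠ root → depth (parent v) + 1 = depth v

namespace RTree

variable {V : Type*} (T : RTree V)

/-- `a ⪯ b` : `a` is an ancestor of `b`, i.e. `a` lies on the path from `b` to the root. -/
def anc (a b : V) : Prop := ∃ k : ℕ, T.parent^[k] b = a

theorem iterate_depth_aux : ∀ (n : ℕ) (v : V), T.depth v = n → T.parent^[n] v = T.root := by
  intro n
  induction n with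
  | zero =>
    intro v hn
    by_cases hv : v = T.root
    · simp [hv]
    · have := T.depth_parent v hv; omega
  | succ n ih =>
    intro v hn
    have hv : v ≠ T.root := by
      intro h; rw [h, T.depth_root] at hn; omega
    have h := T.depth_parent v hv
    rw [Function.iterate_succ_apply]
    exact ih (T.parent v) (by omega)

theorem iterate_depth (v : V) : T.parent^[T.depth v] v = T.root :=
  T.iterate_depth_aux (T.depth v) v rfl

theorem anc_root (b : V) : T.anc T.root b := ⟨T.depth b, T.iterate_depth b⟩

theorem exists_lcaIndex (a b : V) : ∃ k : ℕ, T.anc (T.parent^[k] a) b :=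
  ⟨T.depth a, by rw [T.iterate_depth a]; exact T.anc_root b⟩

open Classical in
/-- The highest common ancestor of `a` and `b` : the deepest vertex that is an ancestor
of both `a` and `b` (i.e. the unique vertex of the path `P[a→b]` that is an ancestor of both). -/
noncomputable def lca (a b : V) : V := T.parent^[Nat.find (T.exists_lcaIndex a b)] a

/-- `ρ(a,b)` : the number of edges of the unique path `P[a→b]` from `a` to `b`. -/
noncomputable def dist (a b : V) : ℕ :=
  (T.depth a - T.depth (T.lca a b)) + (T.depth b - T.depth (T.lca a b))

open Classical in
/-- `P[a→b, d]` : the `d`-th vertex of the path from `a` to `b` (first the ascending part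
from `a` to the highest common ancestor, then the descending part towards `b`);
by convention it equals `b` for `d > ρ(a,b)`. -/
noncomputable def pathVertex (a b : V) (d : ℕ) : V :=
  if T.dist a b ≤ d then b
  else if d ≤ T.depth a - T.depth (T.lca a b) then T.parent^[d] a
  else T.parent^[T.dist a b - d] b

open Classical in
/-- `a ⊓ b` : the member of `{P[a→b,⌊ρ(a,b)/2⌋], P[a→b,⌈ρ(a,b)/2⌉]}` that is an
ancestor of the other one. -/
noncomputable def cap (a b : V) : V :=
  if T.anc (T.pathVertex a b (T.dist a b / 2)) (T.pathVertex a b ((T.dist a b + 1) / 2))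
  then T.pathVertex a b (T.dist a b / 2)
  else T.pathVertex a b ((T.dist a b + 1) / 2)

open Classical in
/-- `a ⊔ b` : the member of `{P[a→b,⌊ρ(a,b)/2⌋], P[a→b,⌈ρ(a,b)/2⌉]}` that is a
descendant of the other one. -/
noncomputable def cup (a b : V) : V :=
  if T.anc (T.pathVertex a b (T.dist a b / 2)) (T.pathVertex a b ((T.dist a b + 1) / 2))
  then T.pathVertex a b ((T.dist a b + 1) / 2)
  else T.pathVertex a b (T.dist a b / 2)

/-- `a ∧ b` : the highest common ancestor of `a` and `b`. -/
noncomputable def meet (a b : V) : V := T.lca a b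

/-- `a ∨ b` : the unique vertex of `P[a→b]` with `ρ(a, a∨b) = ρ(a∧b, b)`. -/
noncomputable def join (a b : V) : V :=
  T.pathVertex a b (T.depth b - T.depth (T.lca a b))

/-- `a ↑^d b = P[a→b,d] ∧ b`. -/
noncomputable def up (d : ℕ) (a b : V) : V := T.meet (T.pathVertex a b d) b

/-- `a ↓_d b = P[a→b, ρ(a ↑^d b, b)]`. -/
noncomputable def down (d : ℕ) (a b : V) : V :=
  T.pathVertex a b (T.dist (T.up d a b) b)

end RTree

section Product

variable {ι : Type*} {V : ι → Type*}

/-- `f` is strongly tree-submodular w.r.t. the trees `T i`: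
`f(x) + f(y) ≥ f(x ⊓ y) + f(x ⊔ y)`, the operations acting componentwise. -/
def StronglyTreeSubmodular (T : ∀ i, RTree (V i)) (f : (∀ i, V i) → ℝ) : Prop :=
  ∀ x y : ∀ i, V i,
    f (fun i => (T i).cap (x i) (y i)) + f (fun i => (T i).cup (x i) (y i)) ≤ f x + f y

/-- `INWARD(x) = { y ∈ NEIB(x) : y ⪯ x }`, where `NEIB(x) = {y : max_i ρ(x_i,y_i) ≤ 1}`. -/
def inward (T : ∀ i, RTree (V i)) (x : ∀ i, V i) : Set (∀ i, V i) :=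
  {y | (∀ i, (T i).dist (x i) (y i) ≤ 1) ∧ ∀ i, (T i).anc (y i) (x i)}

/-- `OUTWARD(x) = { y ∈ NEIB(x) : x ⪯ y }`. -/
def outward (T : ∀ i, RTree (V i)) (x : ∀ i, V i) : Set (∀ i, V i) :=
  {y | (∀ i, (T i).dist (x i) (y i) ≤ 1) ∧ ∀ i, (T i).anc (x i) (y i)}

end Product

/-- `a ⊔ b = sign(a+b)` on `{-1,0,+1}`, computed in `ℤ`. -/
noncomputable def scup (a b : SignType) : SignType := SignType.sign ((a : ℤ) + (b : ℤ))

/-- `a ⊓ b = |ab| · sign(a+b)` on `{-1,0,+1}`, computed in `ℤ`. -/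
noncomputable def scap (a b : SignType) : SignType :=
  SignType.sign (|(a : ℤ) * (b : ℤ)| * Int.sign ((a : ℤ) + (b : ℤ)))

/-- `f` is bisubmodular: `f(x) + f(y) ≥ f(x ⊓ y) + f(x ⊔ y)` where componentwise
`x ⊔ y = sign(x+y)` and `x ⊓ y = |xy| · sign(x+y)`. -/
def Bisubmodular {ι : Type*} (f : (ι → SignType) → ℝ) : Prop :=
  ∀ x y : ι → SignType,
    f (fun i => scap (x i) (y i)) + f (fun i => scup (x i) (y i)) ≤ f x + f y

/-! Proof: when `c_i(-1)` and `c_i(+1)` are distinct children of `x_i`, the tree operations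
`⊓, ⊔` of `T_i` restricted to `{c_i(-1), x_i, c_i(+1)}` are the signed operations `scap, scup`
transported along `c_i`: two distinct children are at distance 2 with midpoint `x_i`, and a child
and its parent are at distance 1, the parent being the ancestor. Strong tree-submodularity at
`c(u)` and `c(v)` is then exactly the bisubmodular inequality for `u` and `v`. -/

section SignedOperations

variable {a b : SignType}

theorem scap_self (a : SignType) : scap a a = a := by cases a <;> decide

theorem scup_self (a : SignType) : scup a a = a := by cases a <;> decide

theorem scap_zero_left (a : SignType) : scap 0 a = 0 := by cases a <;> decide

theorem scup_zero_left (a : SignType) : scup 0 a = a := by cases a <;> decide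

theorem scap_zero_right (a : SignType) : scap a 0 = 0 := by cases a <;> decide

theorem scup_zero_right (a : SignType) : scup a 0 = a := by cases a <;> decide

theorem scap_of_ne (ha : a ≠ 0) (hb : b ≠ 0) (hab : a ≠ b) : scap a b = 0 := by
  revert ha hb hab; cases a <;> cases b <;> decide

theorem scup_of_ne (ha : a ≠ 0) (hb : b ≠ 0) (hab : a ≠ b) : scup a b = 0 := by
  revert ha hb hab; cases a <;> cases b <;> decide

end SignedOperations

namespace RTree

variable {W : Type*} (T : RTree W)

def IsChild (x w : W) : Prop := T.parent w = x ∧ w ≠ x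

theorem depth_parent_le (v : W) : T.depth (T.parent v) ≤ T.depth v := by
  by_cases h : v = T.root
  · simp [h, T.parent_root]
  · have := T.depth_parent v h; omega

theorem depth_iterate_parent_le (k : ℕ) (v : W) : T.depth (T.parent^[k] v) ≤ T.depth v := by
  induction k with
  | zero => rfl
  | succ n ih =>
    rw [Function.iterate_succ_apply']
    exact (T.depth_parent_le _).trans ih

theorem depth_le_of_anc {a b : W} (h : T.anc a b) : T.depth a ≤ T.depth b := by
  obtain ⟨k, rfl⟩ := h
  exact T.depth_iterate_parent_le k b

theorem anc_refl (a : W) : T.anc a a := ⟨0, rfl⟩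

theorem lca_eq_iterate {a b : W} {k : ℕ} (hk : T.anc (T.parent^[k] a) b)
    (hmin : ∀ m < k, ¬ T.anc (T.parent^[m] a) b) : T.lca a b = T.parent^[k] a := by
  classical
  rw [lca, (Nat.find_eq_iff _).mpr ⟨hk, hmin⟩]

theorem lca_self (a : W) : T.lca a a = a :=
  T.lca_eq_iterate (k := 0) (T.anc_refl a) (by simp)

theorem dist_self (a : W) : T.dist a a = 0 := by
  simp [dist, lca_self]

theorem pathVertex_of_dist_le {a b : W} {d : ℕ} (h : T.dist a b ≤ d) :
    T.pathVertex a b d = b := by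
  simp [pathVertex, h]

theorem pathVertex_zero {a b : W} (h : 0 < T.dist a b) : T.pathVertex a b 0 = a := by
  simp [pathVertex, Nat.not_le.mpr h]

theorem cap_self (a : W) : T.cap a a = a := by
  simp [cap, T.dist_self, T.pathVertex_of_dist_le]

theorem cup_self (a : W) : T.cup a a = a := by
  simp [cup, T.dist_self, T.pathVertex_of_dist_le]

open Classical in
theorem cap_of_dist_eq_one {a b : W} (h : T.dist a b = 1) :
    T.cap a b = if T.anc a b then a else b := by
  simp [cap, h, T.pathVertex_zero (h ▸ Nat.one_pos), T.pathVertex_of_dist_le h.le]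

open Classical in
theorem cup_of_dist_eq_one {a b : W} (h : T.dist a b = 1) :
    T.cup a b = if T.anc a b then b else a := by
  simp [cup, h, T.pathVertex_zero (h ▸ Nat.one_pos), T.pathVertex_of_dist_le h.le]

theorem cap_of_dist_eq_two {a b : W} (h : T.dist a b = 2) : T.cap a b = T.pathVertex a b 1 := by
  simp [cap, h]

theorem cup_of_dist_eq_two {a b : W} (h : T.dist a b = 2) : T.cup a b = T.pathVertex a b 1 := by
  simp [cup, h, T.anc_refl]

namespace IsChild

variable {T} {x w w' : W}

theorem depth_eq (h : T.IsChild x w) : T.depth w = T.depth x + 1 := by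
  have hroot : w ≠ T.root := by
    rintro rfl
    exact h.2 (T.parent_root ▸ h.1)
  have := T.depth_parent w hroot
  rw [h.1] at this
  omega

theorem anc (h : T.IsChild x w) : T.anc x w := ⟨1, h.1⟩

theorem not_anc (h : T.IsChild x w) : ¬ T.anc w x := fun hwx => by
  have := T.depth_le_of_anc hwx
  have := h.depth_eq
  omega

theorem not_anc_of_ne (h : T.IsChild x w) (h' : T.IsChild x w') (hne : w ≠ w') :
    ¬ T.anc w w' := by
  rintro ⟨_ | k, hk⟩
  · exact hne hk.symm
  · rw [Function.iterate_succ_apply, h'.1] at hk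
    have := hk ▸ T.depth_iterate_parent_le k x
    have := h.depth_eq
    omega

theorem lca_parent_child (h : T.IsChild x w) : T.lca x w = x :=
  T.lca_eq_iterate (k := 0) h.anc (by simp)

theorem lca_child_parent (h : T.IsChild x w) : T.lca w x = x := by
  rw [T.lca_eq_iterate (k := 1) (by simpa [h.1] using T.anc_refl x) (by simpa using h.not_anc),
    Function.iterate_one, h.1]

theorem lca_of_ne (h : T.IsChild x w) (h' : T.IsChild x w') (hne : w ≠ w') :
    T.lca w w' = x := by
  rw [T.lca_eq_iterate (k := 1) (by simpa [h.1] using h'.anc)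
      (by simpa using h.not_anc_of_ne h' hne), Function.iterate_one, h.1]

theorem dist_parent_child (h : T.IsChild x w) : T.dist x w = 1 := by
  simp [RTree.dist, h.lca_parent_child, h.depth_eq]

theorem dist_child_parent (h : T.IsChild x w) : T.dist w x = 1 := by
  simp [RTree.dist, h.lca_child_parent, h.depth_eq]

theorem dist_of_ne (h : T.IsChild x w) (h' : T.IsChild x w') (hne : w ≠ w') :
    T.dist w w' = 2 := by
  simp [RTree.dist, h.lca_of_ne h' hne, h.depth_eq, h'.depth_eq]

theorem cap_parent_child (h : T.IsChild x w) : T.cap x w = x := by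
  simp [T.cap_of_dist_eq_one h.dist_parent_child, h.anc]

theorem cup_parent_child (h : T.IsChild x w) : T.cup x w = w := by
  simp [T.cup_of_dist_eq_one h.dist_parent_child, h.anc]

theorem cap_child_parent (h : T.IsChild x w) : T.cap w x = x := by
  simp [T.cap_of_dist_eq_one h.dist_child_parent, h.not_anc]

theorem cup_child_parent (h : T.IsChild x w) : T.cup w x = w := by
  simp [T.cup_of_dist_eq_one h.dist_child_parent, h.not_anc]

theorem pathVertex_one_of_ne (h : T.IsChild x w) (h' : T.IsChild x w') (hne : w ≠ w') :
    T.pathVertex w w' 1 = x := by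
  simp [pathVertex, h.dist_of_ne h' hne, h.lca_of_ne h' hne, h.depth_eq, h.1]

theorem cap_of_ne (h : T.IsChild x w) (h' : T.IsChild x w') (hne : w ≠ w') : T.cap w w' = x := by
  rw [T.cap_of_dist_eq_two (h.dist_of_ne h' hne), h.pathVertex_one_of_ne h' hne]

theorem cup_of_ne (h : T.IsChild x w) (h' : T.IsChild x w') (hne : w ≠ w') : T.cup w w' = x := by
  rw [T.cup_of_dist_eq_two (h.dist_of_ne h' hne), h.pathVertex_one_of_ne h' hne]

end IsChild

theorem cap_cup_apply_sign {x : W} {c : SignType → W} (hc0 : c 0 = x)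
    (hchild : ∀ s, s ≠ 0 → T.IsChild x (c s)) (hdistinct : c (-1) ≠ c 1) (a b : SignType) :
    T.cap (c a) (c b) = c (scap a b) ∧ T.cup (c a) (c b) = c (scup a b) := by
  rcases eq_or_ne a b with rfl | hab
  · rw [scap_self, scup_self]
    exact ⟨T.cap_self _, T.cup_self _⟩
  rcases eq_or_ne a 0 with rfl | ha
  · have hb := hchild b hab.symm
    rw [scap_zero_left, scup_zero_left, hc0]
    exact ⟨hb.cap_parent_child, hb.cup_parent_child⟩
  rcases eq_or_ne b 0 with rfl | hb
  · rw [scap_zero_right, scup_zero_right, hc0]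
    exact ⟨(hchild a ha).cap_child_parent, (hchild a ha).cup_child_parent⟩
  have hcab : c a ≠ c b := by
    obtain ⟨rfl, rfl⟩ | ⟨rfl, rfl⟩ : a = -1 ∧ b = 1 ∨ a = 1 ∧ b = -1 := by
      revert ha hb hab; cases a <;> cases b <;> decide
    exacts [hdistinct, hdistinct.symm]
  rw [scap_of_ne ha hb hab, scup_of_ne ha hb hab, hc0]
  exact ⟨(hchild a ha).cap_of_ne (hchild b hb) hcab, (hchild a ha).cup_of_ne (hchild b hb) hcab⟩

end RTree

theorem outward_restriction_bisubmodular_general {ι : Type*} {V : ι → Type*}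
    (T : ∀ i, RTree (V i)) (f : (∀ i, V i) → ℝ)
    (hf : StronglyTreeSubmodular T f) (x : ∀ i, V i) (c : ∀ i, SignType → V i)
    (hc0 : ∀ i, c i 0 = x i)
    (hchild : ∀ i (s : SignType), s ≠ 0 → (T i).parent (c i s) = x i ∧ c i s ≠ x i)
    (hdistinct : ∀ i, c i (-1) ≠ c i 1) :
    ∀ u v : ι → SignType,
      f (fun i => c i (scap (u i) (v i))) + f (fun i => c i (scup (u i) (v i))) ≤
        f (fun i => c i (u i)) + f (fun i => c i (v i)) := by
  intro u v
  have hsigns i := (T i).cap_cup_apply_sign (hc0 i) (hchild i) (hdistinct i) (u i) (v i)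
  simpa only [fun i => (hsigns i).1, fun i => (hsigns i).2] using
    hf (fun i => c i (u i)) (fun i => c i (v i))

/-- The restriction of a strongly tree-submodular function to
`OUTWARD(x)` is bisubmodular when the trees are binary: if each `x_i` has exactly two
children `c_i(-1)` and `c_i(+1)` (and `c_i(0) = x_i`), then
`h(u) = f(i ↦ c_i(u_i))` satisfies `h(u) + h(v) ≥ h(u ⊓ v) + h(u ⊔ v)` for all
`u, v ∈ {-1,0,+1}ⁿ`, where `u ⊔ v = sign(u+v)` and `u ⊓ v = |uv|·sign(u+v)`
componentwise. -/
theorem outward_restriction_bisubmodular {ι : Type*} [Fintype ι] {V : ι → Type*}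
    [∀ i, Fintype (V i)] (T : ∀ i, RTree (V i)) (f : (∀ i, V i) → ℝ)
    (hf : StronglyTreeSubmodular T f) (x : ∀ i, V i) (c : ∀ i, SignType → V i)
    (hc0 : ∀ i, c i 0 = x i)
    (hchild : ∀ i (s : SignType), s ≠ 0 → (T i).parent (c i s) = x i ∧ c i s ≠ x i)
    (hdistinct : ∀ i, c i (-1) ≠ c i 1)
    (honly : ∀ i (v : V i), (T i).parent v = x i → v ≠ x i → v = c i (-1) ∨ v = c i 1) :
    ∀ u v : ι → SignType,
      f (fun i => c i (scap (u i) (v i))) + f (fun i => c i (scup (u i) (v i))) ≤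
        f (fun i => c i (u i)) + f (fun i => c i (v i)) :=
  outward_restriction_bisubmodular_general T f hf x c hc0 hchild hdistinct
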